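/- If P is a 4-dimensional subspace of ℝ⁷ on which the standard G₂ 3-form φ₀ vanishes identically (a coassociative 4-plane), then the restriction of *φ₀ to P is a nonvanishing 4-form on P; in particular *φ₀|_P induces an orientation on P. -/

import Mathlib

open scoped BigOperators

/-- `E n` is Euclidean space `ℝⁿ`. -/
abbrev E (n : ℕ) := EuclideanSpace ℝ (Fin n)

/-- A (constant-coefficient) `k`-form on `ℝⁿ`: an alternating `k`-linear map to `ℝ`. -/
abbrev Form (n k : ℕ) := (E n) [⋀^Fin k]→ₗ[ℝ] ℝ

/-- The basic form `dx_{i₁} ∧ ⋯ ∧ dx_{i_k}` on `ℝⁿ`, for indices `idx`. -/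
noncomputable def dxW {n k : ℕ} (idx : Fin k → Fin n) : Form n k :=
  (Matrix.detRowAlternating).compLinearMap
    (LinearMap.pi fun i => EuclideanSpace.projₗ (idx i))

/-- Wedge product of constant-coefficient forms on `ℝⁿ`. -/
noncomputable def wedge {n k l : ℕ} (α : Form n k) (β : Form n l) : Form n (k + l) :=
  ((TensorProduct.lid ℝ ℝ).toLinearMap.compAlternatingMap
    (α.domCoprod β)).domDomCongr finSumFinEquiv

/-- The Euclidean inner product on `k`-forms on `ℝⁿ`. -/
noncomputable def formInner {n k : ℕ} (α β : Form n k) : ℝ :=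
  ((Nat.factorial k : ℝ))⁻¹ *
    ∑ f : Fin k → Fin n,
      α (fun i => EuclideanSpace.single (f i) 1) * β (fun i => EuclideanSpace.single (f i) 1)

/-- The standard volume form `dx₁ ∧ ⋯ ∧ dxₙ` on `ℝⁿ`. -/
noncomputable def vol (n : ℕ) : Form n n := dxW (fun i => i)

/-- The standard G₂ 3-form `φ₀ = dx₁₂₃ + dx₁₄₅ + dx₁₆₇ + dx₂₄₆ − dx₂₅₇ − dx₃₄₇ − dx₃₅₆`
on `ℝ⁷` (indices here are 0-based: paper index `i` is `i-1`). -/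
noncomputable def phi0 : Form 7 3 :=
  dxW ![0, 1, 2] + dxW ![0, 3, 4] + dxW ![0, 5, 6] + dxW ![1, 3, 5]
    - dxW ![1, 4, 6] - dxW ![2, 3, 6] - dxW ![2, 4, 5]

/-- The 4-form `*φ₀ = dx₄₅₆₇ + dx₂₃₆₇ + dx₂₃₄₅ + dx₁₃₅₇ − dx₁₃₄₆ − dx₁₂₅₆ − dx₁₂₄₇`
on `ℝ⁷` (0-based indices), the Hodge dual of `φ₀`. -/
noncomputable def psi0 : Form 7 4 :=
  dxW ![3, 4, 5, 6] + dxW ![1, 2, 5, 6] + dxW ![1, 2, 3, 4] + dxW ![0, 2, 4, 6]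
    - dxW ![0, 2, 3, 5] - dxW ![0, 1, 4, 5] - dxW ![0, 1, 3, 6]

/-!
Write `u × v` and `χ(x, y, z)` for the vectors metric-dual to `φ₀(u, v, ·)` and
`*φ₀(x, y, z, ·)`. Take an orthonormal basis `x₀, …, x₃` of `P`. Since `φ₀` vanishes on `P`,
the vectors `x₀, …, x₃, x₀ × x₁, x₀ × x₂, x₀ × x₃` form an orthonormal basis of `ℝ⁷`, and
`χ(x₀, x₁, x₂)` is a unit vector orthogonal to all of them except `x₃`. Parseval then gives
`*φ₀(x₀, x₁, x₂, x₃)² = ⟨χ(x₀, x₁, x₂), x₃⟩² = 1`, and an alternating `4`-form on `P` that does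
not vanish on one basis does not vanish on any.
-/

open scoped RealInnerProductSpace

theorem Orthonormal.sumElim {𝕜 F ι κ : Type*} [RCLike 𝕜] [NormedAddCommGroup F]
    [InnerProductSpace 𝕜 F] {u : ι → F} {w : κ → F} (hu : Orthonormal 𝕜 u)
    (hw : Orthonormal 𝕜 w) (huw : ∀ i j, inner 𝕜 (u i) (w j) = 0) :
    Orthonormal 𝕜 (Sum.elim u w) := by
  refine ⟨?_, ?_⟩
  · rintro (i | j)
    exacts [hu.1 i, hw.1 j]
  · rintro (i | j) (i' | j') hne
    · exact hu.2 fun h => hne (congrArg Sum.inl h)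
    · exact huw i j'
    · exact inner_eq_zero_symm.mp (huw i' j)
    · exact hw.2 fun h => hne (congrArg Sum.inr h)

theorem Orthonormal.sum_sq_inner_of_card_eq_finrank {ι F : Type*} [Fintype ι]
    [NormedAddCommGroup F] [InnerProductSpace ℝ F] [FiniteDimensional ℝ F] {v : ι → F}
    (hv : Orthonormal ℝ v) (hcard : Fintype.card ι = Module.finrank ℝ F) (x : F) :
    ∑ i, ⟪v i, x⟫ ^ 2 = ‖x‖ ^ 2 := by
  have hspan := hv.linearIndependent.span_eq_top_of_card_eq_finrank' hcard
  simpa only [OrthonormalBasis.coe_mk] using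
    (OrthonormalBasis.mk hv hspan.ge).sum_sq_inner_right x

theorem Matrix.det_fin_four {R : Type*} [CommRing R] (A : Matrix (Fin 4) (Fin 4) R) :
    A.det =
      A 0 0 * (A 1 1 * A 2 2 * A 3 3 - A 1 1 * A 2 3 * A 3 2 - A 1 2 * A 2 1 * A 3 3
        + A 1 2 * A 2 3 * A 3 1 + A 1 3 * A 2 1 * A 3 2 - A 1 3 * A 2 2 * A 3 1)
      - A 0 1 * (A 1 0 * A 2 2 * A 3 3 - A 1 0 * A 2 3 * A 3 2 - A 1 2 * A 2 0 * A 3 3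
        + A 1 2 * A 2 3 * A 3 0 + A 1 3 * A 2 0 * A 3 2 - A 1 3 * A 2 2 * A 3 0)
      + A 0 2 * (A 1 0 * A 2 1 * A 3 3 - A 1 0 * A 2 3 * A 3 1 - A 1 1 * A 2 0 * A 3 3
        + A 1 1 * A 2 3 * A 3 0 + A 1 3 * A 2 0 * A 3 1 - A 1 3 * A 2 1 * A 3 0)
      - A 0 3 * (A 1 0 * A 2 1 * A 3 2 - A 1 0 * A 2 2 * A 3 1 - A 1 1 * A 2 0 * A 3 2
        + A 1 1 * A 2 2 * A 3 0 + A 1 2 * A 2 0 * A 3 1 - A 1 2 * A 2 1 * A 3 0) := by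
  rw [Matrix.det_succ_row_zero, Fin.sum_univ_four]
  simp [Matrix.det_fin_three, Matrix.submatrix_apply, Fin.succAbove, Fin.lt_def]
  ring

theorem dxW_apply {n k : ℕ} (idx : Fin k → Fin n) (v : Fin k → E n) :
    dxW idx v = (Matrix.of fun i j => v i (idx j)).det := rfl

theorem EuclideanSpace.real_inner_eq_sum {n : ℕ} (x y : E n) : ⟪x, y⟫ = ∑ i, x i * y i := by
  simp [PiLp.inner_apply, mul_comm]

/-- The vector `♯(ι_v α)`, metric-dual to the linear form `w ↦ α (Fin.snoc v w)`. -/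
noncomputable def contractSharp {n k : ℕ} (α : Form n (k + 1)) (v : Fin k → E n) : E n :=
  (InnerProductSpace.toDual ℝ (E n)).symm
    (α.toMultilinearMap.toLinearMap (Fin.snoc v 0) (Fin.last k)).toContinuousLinearMap

theorem inner_contractSharp {n k : ℕ} (α : Form n (k + 1)) (v : Fin k → E n) (w : E n) :
    ⟪contractSharp α v, w⟫ = α (Fin.snoc v w) := by
  simp [contractSharp, InnerProductSpace.toDual_symm_apply, Fin.update_snoc_last]

theorem contractSharp_apply {n k : ℕ} (α : Form n (k + 1)) (v : Fin k → E n) (i : Fin n) :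
    contractSharp α v i = α (Fin.snoc v (EuclideanSpace.single i 1)) := by
  rw [← inner_contractSharp, EuclideanSpace.inner_single_right]
  simp

noncomputable def g2Cross (u v : E 7) : E 7 := contractSharp phi0 ![u, v]

noncomputable def g2TripleCross (x y z : E 7) : E 7 := contractSharp psi0 ![x, y, z]

theorem inner_g2Cross (u v w : E 7) : ⟪g2Cross u v, w⟫ = phi0 ![u, v, w] := by
  simp only [g2Cross, inner_contractSharp, Matrix.Fin.snoc_vecCons, Matrix.Fin.snoc_vecEmpty]

theorem g2Cross_apply (u v : E 7) (i : Fin 7) :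
    g2Cross u v i = phi0 ![u, v, EuclideanSpace.single i 1] := by
  simp only [g2Cross, contractSharp_apply, Matrix.Fin.snoc_vecCons, Matrix.Fin.snoc_vecEmpty]

theorem inner_g2TripleCross (x y z w : E 7) :
    ⟪g2TripleCross x y z, w⟫ = psi0 ![x, y, z, w] := by
  simp only [g2TripleCross, inner_contractSharp, Matrix.Fin.snoc_vecCons, Matrix.Fin.snoc_vecEmpty]

theorem g2TripleCross_apply (x y z : E 7) (i : Fin 7) :
    g2TripleCross x y z i = psi0 ![x, y, z, EuclideanSpace.single i 1] := by
  simp only [g2TripleCross, contractSharp_apply, Matrix.Fin.snoc_vecCons, Matrix.Fin.snoc_vecEmpty]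

theorem inner_g2Cross_g2Cross (a b c : E 7) :
    ⟪g2Cross a b, g2Cross a c⟫ = ⟪a, a⟫ * ⟪b, c⟫ - ⟪a, b⟫ * ⟪a, c⟫ := by
  simp only [EuclideanSpace.real_inner_eq_sum, Fin.sum_univ_seven, g2Cross_apply, phi0,
    AlternatingMap.sub_apply, AlternatingMap.add_apply, dxW_apply, Matrix.det_fin_three,
    Matrix.of_apply, Matrix.cons_val_zero, Matrix.cons_val_one, Matrix.cons_val_two]
  simp
  ring

/-- The first three terms form the Gram determinant `|x ∧ y ∧ z|²`. -/
theorem inner_g2TripleCross_self (x y z : E 7) :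
    ⟪g2TripleCross x y z, g2TripleCross x y z⟫ =
      ⟪x, x⟫ * (⟪y, y⟫ * ⟪z, z⟫ - ⟪y, z⟫ ^ 2) - ⟪x, y⟫ * (⟪x, y⟫ * ⟪z, z⟫ - ⟪y, z⟫ * ⟪x, z⟫)
        + ⟪x, z⟫ * (⟪x, y⟫ * ⟪y, z⟫ - ⟪y, y⟫ * ⟪x, z⟫) - phi0 ![x, y, z] ^ 2 := by
  simp only [EuclideanSpace.real_inner_eq_sum, Fin.sum_univ_seven, g2TripleCross_apply, phi0,
    psi0, AlternatingMap.sub_apply, AlternatingMap.add_apply, dxW_apply, Matrix.det_fin_three,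
    Matrix.det_fin_four, Matrix.of_apply, Matrix.cons_val_zero, Matrix.cons_val_one,
    Matrix.cons_val_two]
  simp
  ring

theorem inner_g2TripleCross_g2Cross (x y z w : E 7) :
    ⟪g2TripleCross x y z, g2Cross x w⟫ =
      -(⟪x, x⟫ * phi0 ![y, z, w]) + ⟪x, y⟫ * phi0 ![x, z, w]
        - ⟪x, z⟫ * phi0 ![x, y, w] + ⟪x, w⟫ * phi0 ![x, y, z] := by
  simp only [EuclideanSpace.real_inner_eq_sum, Fin.sum_univ_seven, g2TripleCross_apply,
    g2Cross_apply, phi0, psi0, AlternatingMap.sub_apply, AlternatingMap.add_apply, dxW_apply,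
    Matrix.det_fin_three, Matrix.det_fin_four, Matrix.of_apply, Matrix.cons_val_zero,
    Matrix.cons_val_one, Matrix.cons_val_two]
  simp
  ring

theorem psi0_sq_eq_one_of_orthonormal {x : Fin 4 → E 7} (hx : Orthonormal ℝ x)
    (hφ : ∀ i j k, phi0 ![x i, x j, x k] = 0) : psi0 x ^ 2 = 1 := by
  have hxx i j : ⟪x i, x j⟫ = if i = j then 1 else 0 := orthonormal_iff_ite.mp hx i j
  set f : Fin 3 → E 7 := fun j => g2Cross (x 0) (x j.succ)
  have hf : Orthonormal ℝ f := by
    refine orthonormal_iff_ite.mpr fun i j => ?_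
    simp [f, inner_g2Cross_g2Cross, hxx, hx.1, Fin.succ_ne_zero, eq_comm (a := (0 : Fin 4))]
  have hxf i j : ⟪x i, f j⟫ = 0 := by
    rw [real_inner_comm, inner_g2Cross, hφ]
  set χ := g2TripleCross (x 0) (x 1) (x 2)
  have hχx i (hi : i ≠ 3) : ⟪x i, χ⟫ = 0 := by
    rw [real_inner_comm, inner_g2TripleCross]
    fin_cases i
    exacts [psi0.map_eq_zero_of_eq _ (i := 0) (j := 3) rfl (by decide),
      psi0.map_eq_zero_of_eq _ (i := 1) (j := 3) rfl (by decide),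
      psi0.map_eq_zero_of_eq _ (i := 2) (j := 3) rfl (by decide), (hi rfl).elim]
  have hχx₃ : ⟪x 3, χ⟫ = psi0 x := by
    rw [real_inner_comm, inner_g2TripleCross]
    exact congrArg psi0 (FinVec.etaExpand_eq x)
  have hχf j : ⟪f j, χ⟫ = 0 := by
    rw [real_inner_comm, inner_g2TripleCross_g2Cross]
    simp [hφ]
  have hχ : ‖χ‖ ^ 2 = 1 := by
    rw [← real_inner_self_eq_norm_sq, inner_g2TripleCross_self]
    simp [hxx, hx.1, hφ]
  have parseval := (hx.sumElim hf hxf).sum_sq_inner_of_card_eq_finrank (by simp) χ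
  simpa [Fintype.sum_sum_type, Fin.sum_univ_four, hχx, hχx₃, hχf, hχ] using parseval

/-- If `P` is a 4-dimensional subspace of `ℝ⁷` on which `φ₀` vanishes
identically (a coassociative 4-plane), then `*φ₀` restricts to a nonvanishing 4-form on
`P`: it is nonzero on every basis of `P` (in particular it induces an orientation on `P`). -/
theorem coassociative_plane_calibrated
    (P : Submodule ℝ (E 7)) (hP : Module.finrank ℝ P = 4)
    (hco : ∀ u v w : E 7, u ∈ P → v ∈ P → w ∈ P → phi0 ![u, v, w] = 0) :
    ∀ b : Module.Basis (Fin 4) ℝ P, psi0 (fun i => (b i : E 7)) ≠ 0 := by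
  intro b
  let e : OrthonormalBasis (Fin 4) ℝ P := (stdOrthonormalBasis ℝ P).reindex (finCongr hP)
  let Ψ := psi0.compLinearMap P.subtype
  have he : Ψ e.toBasis ^ 2 = 1 :=
    psi0_sq_eq_one_of_orthonormal (e.orthonormal.comp_linearIsometry P.subtypeₗᵢ)
      fun i j k => hco _ _ _ (e i).2 (e j).2 (e k).2
  have hΨ : Ψ e.toBasis ≠ 0 := ne_zero_pow two_ne_zero (by rw [he]; exact one_ne_zero)
  exact (Ψ.map_basis_ne_zero_iff b).mpr ((Ψ.map_basis_ne_zero_iff e.toBasis).mp hΨ)
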